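/- The vector field D(x,y) = −6y(−9x⁴+9y⁴+1) ∂_x − 6x(9x⁴+18x²y²+9y⁴+2) ∂_y has an isolated zero at the origin with index −1. -/

import Mathlib

/-!
Rotate the frame along the circle `t ↦ (r cos t, r sin t)` by the angle `θ(t) = -(t + π/2)`.
In that frame the first component of `D` is
`6r (sin² t + 2 cos² t + 9r⁴ (sin⁴ t + cos⁴ t)) > 0`, so the angle of `D` stays within `π/2`
of `θ(t)` and is lifted continuously as `θ(t) + arctan (b/a)`, where `(a, b)` are the
components of `D` in the rotated frame. Over one turn the arctan term returns to its initial
value while `θ` decreases by `2π`.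
-/

open Real

/-- The umbilic identifier vector field of `f(x,y) = x³ - 3xy²`. -/
noncomputable def Dfield (p : ℝ × ℝ) : ℝ × ℝ :=
  (-6 * p.2 * (-9 * p.1 ^ 4 + 9 * p.2 ^ 4 + 1),
   -6 * p.1 * (9 * p.1 ^ 4 + 18 * p.1 ^ 2 * p.2 ^ 2 + 9 * p.2 ^ 4 + 2))

noncomputable def Dnorm (p : ℝ × ℝ) : ℝ :=
  Real.sqrt ((Dfield p).1 ^ 2 + (Dfield p).2 ^ 2)

lemma sqrt_sq_add_sq_mul_cos_sin_arctan_div {a : ℝ} (b : ℝ) (ha : 0 < a) :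
    √(a ^ 2 + b ^ 2) * cos (arctan (b / a)) = a ∧
    √(a ^ 2 + b ^ 2) * sin (arctan (b / a)) = b := by
  have hs : √(1 + (b / a) ^ 2) = √(a ^ 2 + b ^ 2) / a := by
    rw [eq_div_iff ha.ne', ← sqrt_sq ha.le, ← sqrt_mul (by positivity)]
    congr 1
    field_simp
    rw [sq_sqrt (by positivity)]
  have hpos : 0 < √(a ^ 2 + b ^ 2) := by positivity
  rw [cos_arctan, sin_arctan, hs]
  constructor <;> field_simp

/-- The polar angle of `(x, y)` within `π / 2` of `θ`; meaningful when `(x, y)` makes an acute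
angle with the direction `θ`. -/
noncomputable def polarAngleNear (θ x y : ℝ) : ℝ :=
  θ + arctan ((cos θ * y - sin θ * x) / (cos θ * x + sin θ * y))

lemma polarAngleNear_spec {θ x y : ℝ} (h : 0 < cos θ * x + sin θ * y) :
    x = √(x ^ 2 + y ^ 2) * cos (polarAngleNear θ x y) ∧
    y = √(x ^ 2 + y ^ 2) * sin (polarAngleNear θ x y) := by
  set a := cos θ * x + sin θ * y
  set b := cos θ * y - sin θ * x
  obtain ⟨hcos, hsin⟩ := sqrt_sq_add_sq_mul_cos_sin_arctan_div b h
  have hnorm : x ^ 2 + y ^ 2 = a ^ 2 + b ^ 2 := by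
    linear_combination (-x ^ 2 - y ^ 2) * sin_sq_add_cos_sq θ
  rw [polarAngleNear, cos_add, sin_add, hnorm]
  constructor
  · linear_combination (-x) * sin_sq_add_cos_sq θ - cos θ * hcos + sin θ * hsin
  · linear_combination (-y) * sin_sq_add_cos_sq θ - sin θ * hcos - cos θ * hsin

lemma polarAngleNear_sub_two_pi (θ x y : ℝ) :
    polarAngleNear (θ - 2 * π) x y = polarAngleNear θ x y - 2 * π := by
  simp only [polarAngleNear, cos_sub_two_pi, sin_sub_two_pi]
  ring

lemma Continuous.polarAngleNear {θ x y : ℝ → ℝ} (hθ : Continuous θ) (hx : Continuous x)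
    (hy : Continuous y) (h : ∀ t, 0 < cos (θ t) * x t + sin (θ t) * y t) :
    Continuous fun t => _root_.polarAngleNear (θ t) (x t) (y t) :=
  hθ.add <| continuous_arctan.comp <| Continuous.div (by fun_prop) (by fun_prop) fun t => (h t).ne'

@[fun_prop]
lemma continuous_Dfield : Continuous Dfield := by
  unfold Dfield
  fun_prop

lemma Dfield_eq_zero_iff {p : ℝ × ℝ} : Dfield p = 0 ↔ p = 0 := by
  refine ⟨fun h => ?_, fun h => by simp [h, Dfield]⟩
  obtain ⟨h1, h2⟩ := Prod.ext_iff.1 h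
  simp only [Dfield, Prod.fst_zero, Prod.snd_zero] at h1 h2
  have hx : p.1 = 0 := by
    have : 0 < 9 * p.1 ^ 4 + 18 * p.1 ^ 2 * p.2 ^ 2 + 9 * p.2 ^ 4 + 2 := by positivity
    simpa using (mul_eq_zero.1 h2).resolve_right this.ne'
  have hy : p.2 = 0 := by
    have : 0 < -9 * p.1 ^ 4 + 9 * p.2 ^ 4 + 1 := by rw [hx]; positivity
    simpa using (mul_eq_zero.1 h1).resolve_right this.ne'
  exact Prod.ext hx hy

lemma Dfield_circle_component_pos {r : ℝ} (hr : 0 < r) (t : ℝ) :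
    0 < -sin t * (Dfield (r * cos t, r * sin t)).1
      - cos t * (Dfield (r * cos t, r * sin t)).2 := by
  have hform : -sin t * (Dfield (r * cos t, r * sin t)).1
      - cos t * (Dfield (r * cos t, r * sin t)).2
      = 6 * r * (sin t ^ 2 + 2 * cos t ^ 2 + 9 * r ^ 4 * (sin t ^ 4 + cos t ^ 4)) := by
    simp only [Dfield]
    linear_combination (54 * r ^ 5 * (sin t ^ 4 + cos t ^ 4)) * sin_sq_add_cos_sq t
  have : 0 < sin t ^ 2 + 2 * cos t ^ 2 := by nlinarith [sin_sq_add_cos_sq t, sq_nonneg (cos t)]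
  rw [hform]
  positivity

/-- The vector field `D = -6y(-9x⁴+9y⁴+1)∂_x - 6x(9x⁴+18x²y²+9y⁴+2)∂_y` has an isolated
zero at the origin, and its index there is `-1`: on every small circle traversed
counterclockwise, a continuous angle lift of the normalized field decreases by `2π`. -/
theorem Dfield_index_neg_one :
    Dfield 0 = 0 ∧
    (∃ ε : ℝ, 0 < ε ∧
      (∀ p : ℝ × ℝ, p ≠ 0 → Real.sqrt (p.1 ^ 2 + p.2 ^ 2) < ε → Dfield p ≠ 0) ∧
      ∀ r : ℝ, 0 < r → r < ε →
        ∃ α : ℝ → ℝ, Continuous α ∧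
          (∀ t : ℝ, Dfield (r * Real.cos t, r * Real.sin t)
            = (Dnorm (r * Real.cos t, r * Real.sin t) * Real.cos (α t),
               Dnorm (r * Real.cos t, r * Real.sin t) * Real.sin (α t))) ∧
          α (2 * π) - α 0 = -(2 * π)) := by
  refine ⟨Dfield_eq_zero_iff.2 rfl, 1, one_pos, fun p hp _ => mt Dfield_eq_zero_iff.1 hp,
    fun r hr _ => ?_⟩
  set c : ℝ → ℝ × ℝ := fun t => (r * cos t, r * sin t)
  set θ : ℝ → ℝ := fun t => -(t + π / 2)
  have hacute : ∀ t, 0 < cos (θ t) * (Dfield (c t)).1 + sin (θ t) * (Dfield (c t)).2 := by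
    intro t
    simp only [θ, cos_neg, sin_neg, cos_add_pi_div_two, sin_add_pi_div_two]
    linarith [Dfield_circle_component_pos hr t]
  refine ⟨fun t => polarAngleNear (θ t) (Dfield (c t)).1 (Dfield (c t)).2,
    Continuous.polarAngleNear (by fun_prop) (by fun_prop) (by fun_prop) hacute,
    fun t => Prod.ext (polarAngleNear_spec (hacute t)).1 (polarAngleNear_spec (hacute t)).2, ?_⟩
  have hθ : θ (2 * π) = θ 0 - 2 * π := by simp only [θ]; ring
  have hc : c (2 * π) = c 0 := by simp [c]
  simp only [hθ, hc, polarAngleNear_sub_two_pi]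
  ring
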